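/- In a finite 1-2 metric space on n points, if some equivalence class of the relation 'determining the same line' on pairs of distinct points consists of n/2 pairwise disjoint pairs with identical distance labels, then the corresponding line is universal (equals the whole space). -/

import Mathlib

def line {α : Type*} [MetricSpace α] (u v : α) : Set α :=
  {p | dist p u + dist u v = dist p v ∨ dist u p + dist p v = dist u v ∨
       dist u v + dist v p = dist u p}

def OneTwo (α : Type*) [MetricSpace α] : Prop :=
  ∀ x y : α, x ≠ y → dist x y = 1 ∨ dist x y = 2

def Twins {α : Type*} [MetricSpace α] (u v : α) : Prop :=
  dist u v = 2 ∧ ∀ w : α, w ≠ u → w ≠ v → dist u w = dist v w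

def linesOf (α : Type*) [MetricSpace α] : Set (Set α) :=
  {L | ∃ u v : α, u ≠ v ∧ L = line u v}

/-! The `n / 2` pairwise disjoint pairs of the class have `n` endpoints in total, so they cover
every point; and each endpoint of a pair lies on the line the pair determines, which is `L`. -/

theorem left_mem_line {α : Type*} [MetricSpace α] (u v : α) : u ∈ line u v :=
  Or.inr <| Or.inl <| by simp

theorem right_mem_line {α : Type*} [MetricSpace α] (u v : α) : v ∈ line u v :=
  Or.inr <| Or.inr <| by simp

theorem Sym2.exists_mem_of_pairwise_disjoint_of_two_mul_card_eq {α : Type*} [Fintype α]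
    (M : Finset (Sym2 α)) (hdiag : ∀ e ∈ M, ¬e.IsDiag)
    (hdisj : (M : Set (Sym2 α)).Pairwise fun e f => ∀ z : α, z ∈ e → z ∉ f)
    (hcard : 2 * M.card = Fintype.card α) (p : α) : ∃ e ∈ M, p ∈ e := by
  classical
  have hcover : M.biUnion Sym2.toFinset = Finset.univ := by
    apply Finset.eq_univ_of_card
    rw [Finset.card_biUnion fun e he f hf hef => Finset.disjoint_left.mpr fun z hze hzf =>
      hdisj he hf hef z (Sym2.mem_toFinset.mp hze) (Sym2.mem_toFinset.mp hzf)]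
    rw [Finset.sum_congr rfl fun e he => Sym2.card_toFinset_of_not_isDiag e (hdiag e he),
      Finset.sum_const, smul_eq_mul, mul_comm, hcard]
  obtain ⟨e, he, hpe⟩ := Finset.mem_biUnion.mp (hcover ▸ Finset.mem_univ p)
  exact ⟨e, he, Sym2.mem_toFinset.mp hpe⟩

theorem stmt8_general {α : Type*} [MetricSpace α] [Fintype α]
    (L : Set α) (M : Finset (Sym2 α))
    (hline : ∀ x y : α, Sym2.mk x y ∈ M → x ≠ y ∧ line x y = L)
    (hdisj : (M : Set (Sym2 α)).Pairwise fun e f => ∀ z : α, z ∈ e → z ∉ f)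
    (hcard : 2 * M.card = Fintype.card α) :
    L = Set.univ := by
  have hdiag : ∀ e ∈ M, ¬e.IsDiag := fun e he => by
    induction e using Sym2.ind with
    | _ x y => exact Sym2.mk_isDiag_iff.not.mpr (hline x y he).1
  refine Set.eq_univ_of_forall fun p => ?_
  obtain ⟨e, he, hpe⟩ :=
    Sym2.exists_mem_of_pairwise_disjoint_of_two_mul_card_eq M hdiag hdisj hcard p
  induction e using Sym2.ind with
  | _ x y =>
    obtain ⟨-, rfl⟩ := hline x y he
    rcases Sym2.mem_iff.mp hpe with rfl | rfl
    exacts [left_mem_line p y, right_mem_line x p]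

theorem stmt8 {α : Type*} [MetricSpace α] [Fintype α] (h12 : OneTwo α)
    (L : Set α) (M : Finset (Sym2 α)) (d : ℝ)
    (hclass : ∀ x y : α, x ≠ y → (Sym2.mk x y ∈ M ↔ line x y = L))
    (hline : ∀ x y : α, Sym2.mk x y ∈ M → x ≠ y ∧ line x y = L)
    (hlab : ∀ x y : α, Sym2.mk x y ∈ M → dist x y = d)
    (hdisj : (M : Set (Sym2 α)).Pairwise fun e f => ∀ z : α, z ∈ e → z ∉ f)
    (hcard : 2 * M.card = Fintype.card α) :
    L = Set.univ :=
  stmt8_general L M hline hdisj hcard
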